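/- For every real α > 2 there exists a sequence of rationals β_1 < β_2 < ⋯ converging to α and an increasing (under the prefix order) sequence of finite binary words w_1, w_2, … such that each w_n is α-power-free and contains, for each i ≤ n, a factor which is a β_i-power. -/

import Mathlib

/-- Thue–Morse morphism: 0 ↦ 01, 1 ↦ 10 (false = 0, true = 1). -/
def mu : List Bool → List Bool :=
  fun w => w.flatMap (fun b => if b then [true, false] else [false, true])

/-- `w` has period `p`: `w[i] = w[i+p]` whenever both defined. -/
def HasPeriod (w : List Bool) (p : ℕ) : Prop :=
  ∀ i, i + p < w.length → w[i]? = w[i + p]?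

/-- `w` is α-power-free: no factor `u` has a period `p` with `|u|/p ≥ α`. -/
def PowerFree (α : ℝ) (w : List Bool) : Prop :=
  ∀ u p, u <:+: w → 0 < p → HasPeriod u p → (u.length : ℝ) / p < α

/-- `𝓛`: factors of images of `mu`. -/
def InL (w : List Bool) : Prop := ∃ x, w <:+: mu x

/-!
Fix `R = ⌈α⌉` and put `w_n = φ_0 (φ_1 (⋯ (φ_n ε)))` with `φ_m w = δ^t μ^s (0^R w)` for
parameters `(s, t) = (s_m, t_m)`. The prefix `δ^t μ^s (0^R)` of `φ_m w` has period `2^s` and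
length `R 2^s - t`: this is the `β_m`-power, `β_m = R - t / 2^s`, and since `μ` doubles lengths
and periods, the powers of the inner words survive.

Power-freeness is carried along by the invariant "`0^ω w` has no `α`-power ending inside `w`".
For `α > 2`, an `α`-power in `μ g` descends to an `α`-power in `g` of at most half the period.
Hence `μ^s` creates no `α`-power of period `< 2^s`, and `α`-powers ending inside `μ^s w` come
from `0^R w`; those of period `≥ 2^s` ending in the zero part are too short as soon as
`β + 2 / 2^s < α`. Cutting where the Thue–Morse word reads `001` makes the new word start with
`1` right after two zeros of `μ^s (0^R)`, which is what the invariant needs at the cut. Finally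
`s_m = s_0 + 4m` and `t_m ≈ (R - α) 2^{s_m}` make `β_m` increase to `α`.
-/

open Function Set Filter Topology

def thueMorse (n : ℕ) : Bool := (Nat.digits 2 n).sum % 2 == 1

theorem thueMorse_two_mul (n : ℕ) : thueMorse (2 * n) = thueMorse n := by
  rcases n.eq_zero_or_pos with rfl | hn
  · rfl
  · simp [thueMorse, Nat.digits_def' one_lt_two (by omega : 0 < 2 * n)]

theorem thueMorse_two_mul_add_one (n : ℕ) : thueMorse (2 * n + 1) = !thueMorse n := by
  simp only [thueMorse, Nat.digits_def' one_lt_two (by omega : 0 < 2 * n + 1),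
    show (2 * n + 1) / 2 = n by omega, List.sum_cons]
  rcases Nat.mod_two_eq_zero_or_one (Nat.digits 2 n).sum with h | h <;> simp [Nat.add_mod, h]

theorem exists_thueMorse_eq_true (N : ℕ) : ∃ j, N ≤ j ∧ j ≤ N + 2 ∧ thueMorse j = true := by
  obtain ⟨k, hk₁, hk₂⟩ : ∃ k, N ≤ 2 * k ∧ 2 * k + 1 ≤ N + 2 := ⟨(N + 1) / 2, by omega, by omega⟩
  cases h : thueMorse k
  · exact ⟨2 * k + 1, by omega, hk₂, by rw [thueMorse_two_mul_add_one, h]; rfl⟩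
  · exact ⟨2 * k, hk₁, by omega, by rw [thueMorse_two_mul, h]⟩

def muSeq (g : ℕ → Bool) : ℕ → Bool := fun p => if p % 2 = 0 then g (p / 2) else !g (p / 2)

@[simp] theorem muSeq_two_mul (g : ℕ → Bool) (k : ℕ) : muSeq g (2 * k) = g k := by
  simp [muSeq]

@[simp] theorem muSeq_two_mul_add_one (g : ℕ → Bool) (k : ℕ) : muSeq g (2 * k + 1) = !g k := by
  simp [muSeq, show (2 * k + 1) / 2 = k by omega]

theorem muSeq_not_cube (g : ℕ → Bool) (k : ℕ) :
    ¬(muSeq g k = muSeq g (k + 1) ∧ muSeq g (k + 1) = muSeq g (k + 2)) := by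
  rintro ⟨h₁, h₂⟩
  rcases Nat.even_or_odd' k with ⟨m, rfl | rfl⟩
  · simp at h₁
  · rw [show 2 * m + 1 + 1 = 2 * (m + 1) by ring, show 2 * m + 1 + 2 = 2 * (m + 1) + 1 by ring,
      muSeq_two_mul, muSeq_two_mul_add_one] at h₂
    simp at h₂

theorem muSeq_iterate_of_lt (g : ℕ → Bool) {s p : ℕ} (hp : p < 2 ^ s) :
    muSeq^[s] g p = (thueMorse p ^^ g 0) := by
  induction s generalizing p with
  | zero =>
    obtain rfl : p = 0 := by simpa using hp
    simp [thueMorse]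
  | succ s ih =>
    rw [pow_succ] at hp
    rw [iterate_succ_apply']
    rcases Nat.even_or_odd' p with ⟨k, rfl | rfl⟩
    · rw [muSeq_two_mul, ih (by omega), thueMorse_two_mul]
    · rw [muSeq_two_mul_add_one, ih (by omega), thueMorse_two_mul_add_one, Bool.not_xor]

theorem muSeq_eqOn {g g' : ℕ → Bool} {N : ℕ} (h : EqOn g g' (Iio N)) :
    EqOn (muSeq g) (muSeq g') (Iio (2 * N)) := by
  intro p hp
  have hp' : p / 2 < N := by simp only [mem_Iio] at hp; omega
  simp only [muSeq, h hp']

def HasPeriodOn {σ : Type*} (f : ℕ → σ) (i n q : ℕ) : Prop :=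
  ∀ j, i ≤ j → j + q < i + n → f j = f (j + q)

theorem HasPeriodOn.transport {σ : Type*} {f g : ℕ → σ} {i i' n q : ℕ} (h : HasPeriodOn f i n q)
    (hfg : ∀ m < n, f (i + m) = g (i' + m)) : HasPeriodOn g i' n q := by
  intro j hj hjq
  have := h (i + (j - i')) (by omega) (by omega)
  rwa [hfg _ (by omega), add_assoc, hfg _ (by omega), show i' + (j - i') = j by omega,
    show i' + (j - i' + q) = j + q by omega] at this

theorem HasPeriodOn.of_muSeq_two_mul {g : ℕ → Bool} {i n q : ℕ}
    (h : HasPeriodOn (muSeq g) i n (2 * q)) (hn : 2 * q < n) :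
    HasPeriodOn g (i / 2) ((i + n + 1) / 2 - i / 2) q := by
  intro M hM hMq
  rcases (by omega : i ≤ 2 * M ∨ i = 2 * M + 1) with hi | hi
  · have := h (2 * M) hi (by omega)
    rwa [← mul_add, muSeq_two_mul, muSeq_two_mul] at this
  · have := h (2 * M + 1) hi.le (by omega)
    rw [show 2 * M + 1 + 2 * q = 2 * (M + q) + 1 by ring, muSeq_two_mul_add_one,
      muSeq_two_mul_add_one] at this
    simpa using this

/-- An odd period of `muSeq g` forces `g` to be constant: each pair `(2M + 1, 2M + 2)` is carried by
the period onto a pair `(2y, 2y + 1)`, on which `muSeq g` takes two different values. -/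
theorem HasPeriodOn.of_muSeq_odd {g : ℕ → Bool} {i n q : ℕ} (h : HasPeriodOn (muSeq g) i n q)
    (hq : Odd q) (hn : 2 * q < n) : HasPeriodOn g (i / 2) ((i + n + 1) / 2 - i / 2) 1 := by
  obtain ⟨r, rfl⟩ := hq
  intro M hM hM1
  obtain ⟨y, hy₁, hy₂⟩ : ∃ y, muSeq g (2 * y) = muSeq g (2 * M + 1) ∧
      muSeq g (2 * y + 1) = muSeq g (2 * (M + 1)) := by
    by_cases hfwd : 2 * M + 2 * r + 3 < i + n
    · refine ⟨M + r + 1, ?_, ?_⟩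
      · rw [h (2 * M + 1) (by omega) (by omega)]; congr 1; ring
      · rw [h (2 * (M + 1)) (by omega) (by omega)]; congr 1; ring
    · refine ⟨M - r, ?_, ?_⟩
      · rw [h (2 * (M - r)) (by omega) (by omega)]; congr 1; omega
      · rw [h (2 * (M - r) + 1) (by omega) (by omega)]; congr 1; omega
  simp only [muSeq_two_mul, muSeq_two_mul_add_one] at hy₁ hy₂
  rw [← hy₂, hy₁, Bool.not_not]

theorem two_mul_lt_of_mul_le {α : ℝ} (hα : 2 < α) {q n : ℕ} (hq : 0 < q) (hn : α * q ≤ n) :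
    2 * q < n := by
  have : (0 : ℝ) < q := by exact_mod_cast hq
  have : (2 * q : ℝ) < n := by nlinarith
  exact_mod_cast this

/-- An even period halves; an odd one makes `g` constant on the window, which is an `α`-power of
period `1` unless `q = 1`, and period `1` is impossible in `muSeq g`. -/
theorem HasPeriodOn.exists_of_muSeq {α : ℝ} (hα : 2 < α) {g : ℕ → Bool} {i n q : ℕ}
    (h : HasPeriodOn (muSeq g) i n q) (hq : 0 < q) (hn : α * q ≤ n) :
    ∃ q', 0 < q' ∧ 2 * q' ≤ q ∧ α * q' ≤ ((i + n + 1) / 2 - i / 2 : ℕ) ∧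
      HasPeriodOn g (i / 2) ((i + n + 1) / 2 - i / 2) q' := by
  have h2q := two_mul_lt_of_mul_le hα hq hn
  have hhalf : (n : ℝ) ≤ 2 * ((i + n + 1) / 2 - i / 2 : ℕ) := by
    exact_mod_cast (by omega : n ≤ 2 * ((i + n + 1) / 2 - i / 2))
  rcases Nat.even_or_odd' q with ⟨q', rfl | rfl⟩
  · refine ⟨q', by omega, le_rfl, ?_, h.of_muSeq_two_mul (by omega)⟩
    push_cast at hn
    linarith
  · rcases Nat.eq_zero_or_pos q' with rfl | hq'
    · exact (muSeq_not_cube g i ⟨h i le_rfl (by omega), h (i + 1) (by omega) (by omega)⟩).elim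
    · refine ⟨1, one_pos, by omega, ?_, h.of_muSeq_odd (odd_two_mul_add_one q') h2q⟩
      have : (1 : ℝ) ≤ q' := by exact_mod_cast hq'
      push_cast at hn ⊢
      nlinarith

theorem HasPeriodOn.length_lt_of_muSeq_iterate {α : ℝ} (hα : 2 < α) {g : ℕ → Bool} {s i n q : ℕ}
    (h : HasPeriodOn (muSeq^[s] g) i n q) (hq : 0 < q) (hqs : q < 2 ^ s) : (n : ℝ) < α * q := by
  induction s generalizing i n q with
  | zero => omega
  | succ s ih =>
    rw [iterate_succ_apply'] at h
    rw [pow_succ] at hqs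
    by_contra! hn
    obtain ⟨q', hq', hqq', hn', h'⟩ := h.exists_of_muSeq hα hq hn
    exact (ih h' hq' (by omega)).not_ge hn'

def NoPowerEndingIn (α : ℝ) (f : ℕ → Bool) (a b : ℕ) : Prop :=
  ∀ i n q, 0 < q → a < i + n → i + n ≤ b → HasPeriodOn f i n q → (n : ℝ) < α * q

theorem NoPowerEndingIn.map_muSeq {α : ℝ} (hα : 2 < α) {g : ℕ → Bool} {a b : ℕ}
    (hg : NoPowerEndingIn α g a b) : NoPowerEndingIn α (muSeq g) (2 * a) (2 * b) := by
  intro i n q hq ha hb h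
  by_contra! hn
  obtain ⟨q', hq', -, hn', h'⟩ := h.exists_of_muSeq hα hq hn
  exact (hg _ _ q' hq' (by omega) (by omega) h').not_ge hn'

theorem NoPowerEndingIn.map_muSeq_iterate {α : ℝ} (hα : 2 < α) {g : ℕ → Bool} {a b : ℕ}
    (hg : NoPowerEndingIn α g a b) (s : ℕ) :
    NoPowerEndingIn α (muSeq^[s] g) (2 ^ s * a) (2 ^ s * b) := by
  induction s with
  | zero => simpa using hg
  | succ s ih =>
    rw [iterate_succ_apply', pow_succ', mul_assoc, mul_assoc]
    exact ih.map_muSeq hα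

def zeroPad (a : ℕ) (f : ℕ → Bool) : ℕ → Bool := fun p => if p < a then false else f (p - a)

theorem zeroPad_of_lt {a p : ℕ} (f : ℕ → Bool) (hp : p < a) : zeroPad a f p = false := if_pos hp

@[simp] theorem zeroPad_add (a : ℕ) (f : ℕ → Bool) (m : ℕ) : zeroPad a f (a + m) = f m := by
  simp [zeroPad]

/-- `0^ω f` contains no `α`-power ending inside `f` (here `L` is the length of the word `f`). -/
def PadPowerFree (α : ℝ) (f : ℕ → Bool) (L : ℕ) : Prop :=
  ∀ a, NoPowerEndingIn α (zeroPad a f) a (a + L)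

theorem PadPowerFree.congr {α : ℝ} {f f' : ℕ → Bool} {L : ℕ} (hf : PadPowerFree α f L)
    (hff' : EqOn f f' (Iio L)) : PadPowerFree α f' L := by
  intro a i n q hq ha hb h
  refine hf a i n q hq ha hb (h.transport fun m hm => ?_)
  by_cases hlt : i + m < a
  · rw [zeroPad_of_lt _ hlt, zeroPad_of_lt _ hlt]
  · obtain ⟨k, hk⟩ : ∃ k, i + m = a + k := ⟨i + m - a, by omega⟩
    rw [hk, zeroPad_add, zeroPad_add]
    exact (hff' (mem_Iio.2 (by omega))).symm

/-- A period `q ≤ a - i` carries the first letter `1` of `w` back into the zeros; a longer one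
copies the `000` in front of `w` into `w`. -/
theorem not_hasPeriodOn_zeroPad {w : ℕ → Bool} (hw0 : w 0 = true)
    (hcube : ∀ m, ¬(w m = w (m + 1) ∧ w (m + 1) = w (m + 2))) {a i n q : ℕ}
    (hi : i + 3 ≤ a) (ha : a < i + n) (hq : 0 < q) (hn : 2 * q < n) :
    ¬HasPeriodOn (zeroPad a w) i n q := by
  intro h
  rcases le_or_gt q (a - i) with hqa | hqa
  · have := h (a - q) (by omega) (by omega)
    rw [zeroPad_of_lt _ (by omega), show a - q + q = a + 0 by omega, zeroPad_add, hw0] at this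
    exact Bool.false_ne_true this
  · have e : ∀ k < 3, w (q - 3 + k) = false := fun k hk => by
      have := h (a - 3 + k) (by omega) (by omega)
      rwa [zeroPad_of_lt _ (by omega), show a - 3 + k + q = a + (q - 3 + k) by omega, zeroPad_add,
        eq_comm] at this
    exact hcube (q - 3) ⟨(e 0 (by norm_num)).trans (e 1 (by norm_num)).symm,
      (e 1 (by norm_num)).trans (e 2 (by norm_num)).symm⟩

/-- Parameters of one step `w ↦ δ^t μ^s (0^R w)`; `margin` says `β + 2 / 2^s < α` for
`β = R - t / 2^s`. -/
structure Admissible (α : ℝ) (R s t : ℕ) : Prop where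
  pos : 0 < R
  two_le : 2 ≤ t
  lt_two_pow : t < 2 ^ s
  thueMorse_sub_two : thueMorse (t - 2) = false
  thueMorse_sub_one : thueMorse (t - 1) = false
  thueMorse_self : thueMorse t = true
  margin : (2 ^ s * R + 2 : ℝ) < α * 2 ^ s + t

section Step

variable {α : ℝ} {R s t L : ℕ} {f : ℕ → Bool}

theorem muSeq_iterate_zeroPad_of_lt (hR : 0 < R) {p : ℕ} (hp : p < 2 ^ s) :
    muSeq^[s] (zeroPad R f) p = thueMorse p := by
  simp [muSeq_iterate_of_lt _ hp, zeroPad, hR]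

/-- Powers ending in the zero part of `μ^s (0^R f)` have period below `2^s` or are too short by
the margin; those ending in the `f` part descend to `0^R f`. -/
theorem Admissible.length_lt_of_hasPeriodOn (hα : 2 < α) (hf : PadPowerFree α f L)
    (hp : Admissible α R s t) {i n q : ℕ} (hq : 0 < q) (hi : t ≤ i + 2)
    (hend : i + n ≤ 2 ^ s * (R + L)) (h : HasPeriodOn (muSeq^[s] (zeroPad R f)) i n q) :
    (n : ℝ) < α * q := by
  rcases le_or_gt (i + n) (2 ^ s * R) with hzero | hR
  · rcases lt_or_ge q (2 ^ s) with hqs | hqs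
    · exact h.length_lt_of_muSeq_iterate hα hq hqs
    · have hnt : (n + t : ℝ) ≤ 2 ^ s * R + 2 := by
        exact_mod_cast (by omega : n + t ≤ 2 ^ s * R + 2)
      have hqs' : (2 : ℝ) ^ s ≤ q := by exact_mod_cast hqs
      nlinarith [hp.margin]
  · exact NoPowerEndingIn.map_muSeq_iterate hα (hf R) s i n q hq hR hend h

theorem Admissible.padPowerFree (hα : 2 < α) (hf : PadPowerFree α f L)
    (hp : Admissible α R s t) :
    PadPowerFree α (fun p => muSeq^[s] (zeroPad R f) (t + p)) (2 ^ s * (R + L) - t) := by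
  have hY : ∀ p < 2 ^ s, muSeq^[s] (zeroPad R f) p = thueMorse p :=
    fun p hp' => muSeq_iterate_zeroPad_of_lt hp.pos hp'
  have hts := hp.lt_two_pow
  have ht2 := hp.two_le
  have htL : t ≤ 2 ^ s * (R + L) :=
    hts.le.trans (Nat.le_mul_of_pos_right _ (by linarith [hp.pos]))
  intro a i n q hq ha hend h
  by_contra! hn
  have h2q := two_mul_lt_of_mul_le hα hq hn
  rcases le_or_gt a (i + 2) with hai | hai
  -- with at most two zeros in front, the window sits in `μ^s (0^R f)`, which reads `00` before `t`
  · refine (hp.length_lt_of_hasPeriodOn hα hf hq (i := t + i - a) (by omega) (by omega)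
      (h.transport fun m hm => ?_)).not_ge hn
    by_cases hlt : i + m < a
    · rw [zeroPad_of_lt _ hlt]
      rcases (by omega : t + i - a + m = t - 2 ∨ t + i - a + m = t - 1) with he | he <;>
        rw [he, hY _ (by omega)]
      exacts [hp.thueMorse_sub_two.symm, hp.thueMorse_sub_one.symm]
    · obtain ⟨k, hk⟩ : ∃ k, i + m = a + k := ⟨i + m - a, by omega⟩
      rw [hk, zeroPad_add, show t + i - a + m = t + k by omega]
  · obtain ⟨s, rfl⟩ : ∃ s', s = s' + 1 :=
      Nat.exists_eq_add_one.2 (Nat.pos_of_ne_zero fun hs => by simp [hs] at hts; omega)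
    refine not_hasPeriodOn_zeroPad ?_ (fun m => ?_) (by omega) ha hq h2q h
    · rw [add_zero, hY _ hts, hp.thueMorse_self]
    · simp only [iterate_succ_apply']
      exact muSeq_not_cube _ (t + m)

end Step

def toSeq (v : List Bool) : ℕ → Bool := fun p => v[p]?.getD false

theorem toSeq_replicate_append (R : ℕ) (v : List Bool) :
    toSeq (List.replicate R false ++ v) = zeroPad R (toSeq v) := by
  funext p
  by_cases hp : p < R
  · simp [toSeq, zeroPad_of_lt _ hp, List.getElem?_append_left, hp]
  · obtain ⟨k, rfl⟩ : ∃ k, p = R + k := ⟨p - R, by omega⟩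
    simp [toSeq, List.getElem?_append_right]

theorem mu_append (l₁ l₂ : List Bool) : mu (l₁ ++ l₂) = mu l₁ ++ mu l₂ := List.flatMap_append

theorem mu_iterate_append (s : ℕ) (l₁ l₂ : List Bool) :
    mu^[s] (l₁ ++ l₂) = mu^[s] l₁ ++ mu^[s] l₂ := by
  induction s with
  | zero => rfl
  | succ s ih => rw [iterate_succ_apply', iterate_succ_apply', iterate_succ_apply', ih, mu_append]

theorem mu_cons (b : Bool) (l : List Bool) : mu (b :: l) = b :: (!b) :: mu l := by
  cases b <;> rfl

theorem mu_length (l : List Bool) : (mu l).length = 2 * l.length := by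
  induction l with
  | nil => rfl
  | cons b l ih => rw [mu_cons]; simp [ih]; ring

theorem mu_iterate_length (s : ℕ) (l : List Bool) : (mu^[s] l).length = 2 ^ s * l.length := by
  induction s with
  | zero => simp
  | succ s ih => rw [iterate_succ_apply', mu_length, ih, pow_succ]; ring

theorem mu_getElem?_two_mul (l : List Bool) (k : ℕ) : (mu l)[2 * k]? = l[k]? := by
  induction l generalizing k with
  | nil => rfl
  | cons b l ih => cases k <;> simp [mu_cons, Nat.mul_succ, ih]

theorem mu_getElem?_two_mul_add_one (l : List Bool) (k : ℕ) :
    (mu l)[2 * k + 1]? = l[k]?.map (!·) := by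
  induction l generalizing k with
  | nil => rfl
  | cons b l ih => cases k <;> simp [mu_cons, Nat.mul_succ, ih]

theorem toSeq_mu (l : List Bool) :
    EqOn (toSeq (mu l)) (muSeq (toSeq l)) (Iio (2 * l.length)) := by
  intro p hp
  have hk : p / 2 < l.length := by simp only [mem_Iio] at hp; omega
  rcases Nat.even_or_odd' p with ⟨k, rfl | rfl⟩
  · simp [toSeq, mu_getElem?_two_mul]
  · simp [toSeq, mu_getElem?_two_mul_add_one, List.getElem?_eq_getElem (by omega : k < l.length)]

theorem toSeq_mu_iterate (s : ℕ) (v : List Bool) :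
    EqOn (toSeq (mu^[s] v)) (muSeq^[s] (toSeq v)) (Iio (2 ^ s * v.length)) := by
  induction s with
  | zero => simp [EqOn]
  | succ s ih =>
    rw [iterate_succ_apply', iterate_succ_apply', pow_succ', mul_assoc]
    have := toSeq_mu (mu^[s] v)
    rw [mu_iterate_length] at this
    exact this.trans (muSeq_eqOn ih)

theorem padPowerFree_nil (α : ℝ) : PadPowerFree α (toSeq []) 0 :=
  fun _ _ _ _ _ ha hb _ => absurd (ha.trans_le hb) (by simp)

theorem HasPeriod.hasPeriodOn {u : List Bool} {p : ℕ} (h : HasPeriod u p) :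
    HasPeriodOn (toSeq u) 0 u.length p := fun j _ hj => by
  simp only [toSeq, h j (by omega)]

theorem PadPowerFree.powerFree {α : ℝ} (hα : 0 < α) {v : List Bool}
    (hv : PadPowerFree α (toSeq v) v.length) : PowerFree α v := by
  rintro u p ⟨l₁, l₂, rfl⟩ hp hper
  rw [div_lt_iff₀ (by exact_mod_cast hp)]
  rcases Nat.eq_zero_or_pos u.length with hu | hu
  · simpa [hu] using mul_pos hα (by exact_mod_cast hp : (0 : ℝ) < p)
  refine hv 0 l₁.length u.length p hp (by omega)
    (by simp) (hper.hasPeriodOn.transport fun m hm => ?_)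
  simp [toSeq, zeroPad, List.append_assoc, List.getElem?_append_right, List.getElem?_append_left hm]

theorem HasPeriod.drop {u : List Bool} {p : ℕ} (h : HasPeriod u p) (t : ℕ) :
    HasPeriod (u.drop t) p := fun i hi => by
  simp only [List.getElem?_drop, ← add_assoc]
  exact h _ (by simp at hi; omega)

theorem hasPeriod_replicate (R : ℕ) (b : Bool) : HasPeriod (List.replicate R b) 1 := fun i hi => by
  simp only [List.length_replicate] at hi
  simp [hi, show i < R by omega]

theorem HasPeriod.map_mu {u : List Bool} {p : ℕ} (h : HasPeriod u p) :
    HasPeriod (mu u) (2 * p) := by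
  intro i hi
  rw [mu_length] at hi
  rcases Nat.even_or_odd' i with ⟨k, rfl | rfl⟩
  · rw [← mul_add, mu_getElem?_two_mul, mu_getElem?_two_mul]
    exact h k (by omega)
  · rw [show 2 * k + 1 + 2 * p = 2 * (k + p) + 1 by ring, mu_getElem?_two_mul_add_one,
      mu_getElem?_two_mul_add_one, h k (by omega)]

theorem HasPeriod.map_mu_iterate {u : List Bool} {p : ℕ} (h : HasPeriod u p) (s : ℕ) :
    HasPeriod (mu^[s] u) (2 ^ s * p) := by
  induction s with
  | zero => simpa using h
  | succ s ih =>
    rw [iterate_succ_apply', pow_succ', mul_assoc]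
    exact ih.map_mu

/-- The paper's `φ(w) = δ^t μ^s (0^R w)`, where `δ` erases the first letter. -/
def stepWord (R s t : ℕ) (v : List Bool) : List Bool :=
  (mu^[s] (List.replicate R false ++ v)).drop t

theorem stepWord_length (R s t : ℕ) (v : List Bool) :
    (stepWord R s t v).length = 2 ^ s * (R + v.length) - t := by
  simp [stepWord, mu_iterate_length]

theorem stepWord_eq_append {R s t : ℕ} (ht : t ≤ 2 ^ s * R) (v : List Bool) :
    stepWord R s t v = (mu^[s] (List.replicate R false)).drop t ++ mu^[s] v := by
  rw [stepWord, mu_iterate_append, List.drop_append_of_le_length (by simpa [mu_iterate_length])]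

theorem stepWord_prefix (R s t : ℕ) {v v' : List Bool} (h : v <+: v') :
    stepWord R s t v <+: stepWord R s t v' := by
  obtain ⟨r, rfl⟩ := h
  exact List.IsPrefix.drop ⟨mu^[s] r, by simp only [mu_iterate_append, List.append_assoc]⟩ t

theorem toSeq_stepWord (R s t : ℕ) (v : List Bool) :
    EqOn (toSeq (stepWord R s t v)) (fun p => muSeq^[s] (zeroPad R (toSeq v)) (t + p))
      (Iio (2 ^ s * (R + v.length) - t)) := fun p hp => by
  have := toSeq_mu_iterate s (List.replicate R false ++ v)
    (show t + p ∈ Iio _ by simp only [mem_Iio] at hp ⊢; simp; omega)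
  rw [toSeq_replicate_append] at this
  simp [← this, toSeq, stepWord]

theorem padPowerFree_stepWord {α : ℝ} (hα : 2 < α) {R s t : ℕ} (hp : Admissible α R s t)
    {v : List Bool} (hv : PadPowerFree α (toSeq v) v.length) :
    PadPowerFree α (toSeq (stepWord R s t v)) (stepWord R s t v).length := by
  rw [stepWord_length]
  exact (hp.padPowerFree hα hv).congr (toSeq_stepWord R s t v).symm

def HasPowerFactor (w : List Bool) (r : ℚ) : Prop :=
  ∃ (u : List Bool) (p : ℕ), u <:+: w ∧ 0 < p ∧ HasPeriod u p ∧ (u.length : ℚ) / p = r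

theorem hasPowerFactor_stepWord {R s t : ℕ} (ht : t ≤ 2 ^ s * R) (v : List Bool) :
    HasPowerFactor (stepWord R s t v) (R - t / 2 ^ s) := by
  refine ⟨(mu^[s] (List.replicate R false)).drop t, 2 ^ s, ?_, by positivity, ?_, ?_⟩
  · rw [stepWord_eq_append ht]
    exact (List.prefix_append _ _).isInfix
  · simpa using ((hasPeriod_replicate R false).map_mu_iterate s).drop t
  · rw [List.length_drop, mu_iterate_length, List.length_replicate, Nat.cast_sub ht]
    push_cast
    field_simp

theorem HasPowerFactor.stepWord {v : List Bool} {r : ℚ} (h : HasPowerFactor v r) {R s t : ℕ}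
    (ht : t ≤ 2 ^ s * R) : HasPowerFactor (stepWord R s t v) r := by
  obtain ⟨u, p, ⟨l₁, l₂, rfl⟩, hp, hper, rfl⟩ := h
  refine ⟨mu^[s] u, 2 ^ s * p, ?_, by positivity, hper.map_mu_iterate s, ?_⟩
  · rw [stepWord_eq_append ht, mu_iterate_append, mu_iterate_append]
    exact ⟨(mu^[s] (List.replicate R false)).drop t ++ mu^[s] l₁, mu^[s] l₂, by simp⟩
  · rw [mu_iterate_length]
    push_cast
    rw [mul_div_mul_left _ _ (by positivity)]

/-- `nestedWord R S T k m = φ_m (φ_{m+1} (⋯ (φ_{m+k-1} ε)))` with `φ_i = stepWord R (S i) (T i)`;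
the paper's `w_n` is `nestedWord R S T (n + 1) 0`. -/
def nestedWord (R : ℕ) (S T : ℕ → ℕ) : ℕ → ℕ → List Bool
  | 0, _ => []
  | k + 1, m => stepWord R (S m) (T m) (nestedWord R S T k (m + 1))

section NestedWord

variable (R : ℕ) (S T : ℕ → ℕ)

theorem nestedWord_prefix (k m : ℕ) : nestedWord R S T k m <+: nestedWord R S T (k + 1) m := by
  induction k generalizing m with
  | zero => exact List.nil_prefix
  | succ k ih => exact stepWord_prefix _ _ _ (ih (m + 1))

theorem padPowerFree_nestedWord {α : ℝ} (hα : 2 < α) (hp : ∀ m, Admissible α R (S m) (T m))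
    (k m : ℕ) : PadPowerFree α (toSeq (nestedWord R S T k m)) (nestedWord R S T k m).length := by
  induction k generalizing m with
  | zero => exact padPowerFree_nil α
  | succ k ih => exact padPowerFree_stepWord hα (hp m) (ih (m + 1))

theorem hasPowerFactor_nestedWord (ht : ∀ m, T m ≤ 2 ^ S m * R) {i k : ℕ} (hik : i < k)
    (m : ℕ) : HasPowerFactor (nestedWord R S T k m) (R - T (m + i) / 2 ^ S (m + i)) := by
  induction k generalizing m i with
  | zero => omega
  | succ k ih =>
    rcases i with _ | i
    · exact hasPowerFactor_stepWord (ht m) _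
    · rw [show m + (i + 1) = m + 1 + i by ring]
      exact (ih (by omega) (m + 1)).stepWord (ht m)

end NestedWord

theorem exists_thueMorse_factor_001 {x : ℝ} (hx : 0 ≤ x) : ∃ t : ℕ, x + 3 < t ∧ (t : ℝ) ≤ x + 15 ∧
    thueMorse (t - 2) = false ∧ thueMorse (t - 1) = false ∧ thueMorse t = true := by
  obtain ⟨j, hj₁, hj₂, hj⟩ := exists_thueMorse_eq_true (⌊x / 4⌋₊ + 1)
  have hlo : x / 4 < j := (Nat.lt_floor_add_one _).trans_le (by exact_mod_cast hj₁)
  have hhi : (j : ℝ) ≤ x / 4 + 3 := by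
    have : (j : ℝ) ≤ ⌊x / 4⌋₊ + 3 := by exact_mod_cast (by omega : j ≤ ⌊x / 4⌋₊ + 3)
    linarith [Nat.floor_le (by positivity : 0 ≤ x / 4)]
  refine ⟨4 * j + 3, by push_cast; linarith, by push_cast; linarith, ?_⟩
  rw [show 4 * j + 3 - 2 = 2 * (2 * j) + 1 by omega, show 4 * j + 3 - 1 = 2 * (2 * j + 1) by omega,
    show 4 * j + 3 = 2 * (2 * j + 1) + 1 by ring]
  simp [thueMorse_two_mul, thueMorse_two_mul_add_one, hj]

theorem exists_admissible {α : ℝ} {R s : ℕ} (hR : 0 < R) (hαR : α ≤ R)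
    (hs : 15 < (α + 1 - R) * 2 ^ s) :
    ∃ t, Admissible α R s t ∧ α - 15 / 2 ^ s ≤ (R - t / 2 ^ s : ℝ) ∧
      (R - t / 2 ^ s : ℝ) < α - 3 / 2 ^ s := by
  have hpos : (0 : ℝ) < 2 ^ s := by positivity
  obtain ⟨t, ht₃, ht₁₅, h₂, h₁, h₀⟩ :=
    exists_thueMorse_factor_001 (mul_nonneg (sub_nonneg.2 hαR) hpos.le)
  have ht : (R : ℝ) - t / 2 ^ s = α - (t - (R - α) * 2 ^ s) / 2 ^ s := by field_simp; ring
  refine ⟨t, ⟨hR, ?_, ?_, h₂, h₁, h₀, by linarith⟩, ?_, ?_⟩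
  · have : (2 : ℝ) ≤ t := by nlinarith
    exact_mod_cast this
  · have : (t : ℝ) < 2 ^ s := by linarith
    exact_mod_cast this
  · rw [ht]
    exact sub_le_sub_left (div_le_div_of_nonneg_right (by linarith) hpos.le) α
  · rw [ht]
    exact sub_lt_sub_left (div_lt_div_of_pos_right (by linarith) hpos) α

/-- Since `15 < 3 * 2 ^ 4`, the intervals `[α - 15 / 2 ^ s, α - 3 / 2 ^ s)` for
`s = s₀, s₀ + 4, s₀ + 8, …` are disjoint, lie in increasing order and shrink to `α`. -/
theorem strictMono_and_tendsto_of_bounds {α : ℝ} {β : ℕ → ℝ} (s₀ : ℕ)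
    (hβ : ∀ m, α - 15 / 2 ^ (s₀ + 4 * m) ≤ β m ∧ β m < α - 3 / 2 ^ (s₀ + 4 * m)) :
    StrictMono β ∧ Tendsto β atTop (𝓝 α) := by
  constructor
  · refine strictMono_nat_of_lt_succ fun m => (hβ m).2.trans_le (le_trans ?_ (hβ (m + 1)).1)
    have hK : (0 : ℝ) < 2 ^ (s₀ + 4 * m) := by positivity
    rw [show s₀ + 4 * (m + 1) = s₀ + 4 * m + 4 by ring, pow_add (2 : ℝ) (s₀ + 4 * m) 4,
      sub_le_sub_iff_left, div_le_div_iff₀ (by positivity) hK]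
    nlinarith
  · have hpow : Tendsto (fun m : ℕ => (2 : ℝ) ^ (s₀ + 4 * m)) atTop atTop :=
      (tendsto_pow_atTop_atTop_of_one_lt one_lt_two).comp
        (tendsto_atTop_mono (fun m => show m ≤ s₀ + 4 * m by omega) tendsto_id)
    have hlow := (tendsto_const_nhds (x := (15 : ℝ))).div_atTop hpow
    refine tendsto_of_tendsto_of_tendsto_of_le_of_le (by simpa using hlow.const_sub α)
      tendsto_const_nhds (fun m => (hβ m).1) fun m => (hβ m).2.le.trans ?_
    exact sub_le_self _ (by positivity)

theorem increasing_powerFree_words (α : ℝ) (hα : 2 < α) :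
    ∃ (β : ℕ → ℚ) (w : ℕ → List Bool),
      StrictMono β ∧
      Filter.Tendsto (fun n => (β n : ℝ)) Filter.atTop (nhds α) ∧
      (∀ n, w n <+: w (n + 1)) ∧
      (∀ n, PowerFree α (w n)) ∧
      (∀ n, ∀ i ≤ n, ∃ (u : List Bool) (p : ℕ), u <:+: w n ∧ 0 < p ∧
        HasPeriod u p ∧ ((u.length : ℚ) / p = β i)) := by
  set R := ⌈α⌉₊
  have hR : 0 < R := Nat.ceil_pos.2 (by linarith)
  have hRα : 0 < α + 1 - R := by linarith [Nat.ceil_lt_add_one (by linarith : 0 ≤ α)]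
  obtain ⟨s₀, hs₀⟩ := pow_unbounded_of_one_lt (15 / (α + 1 - R)) one_lt_two
  rw [div_lt_iff₀ hRα, mul_comm] at hs₀
  let S m := s₀ + 4 * m
  have hS : ∀ m, 15 < (α + 1 - R) * 2 ^ S m := fun m =>
    hs₀.trans_le (by gcongr; exacts [one_le_two, Nat.le_add_right _ _])
  choose T hT using fun m => exists_admissible hR (Nat.le_ceil α) (hS m)
  let β m : ℚ := R - T m / 2 ^ S m
  obtain ⟨hmono, hlim⟩ := strictMono_and_tendsto_of_bounds (β := fun m => (β m : ℝ)) s₀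
    fun m => by simpa [β] using (hT m).2
  refine ⟨β, fun n => nestedWord R S T (n + 1) 0, fun _ _ h => (Rat.cast_lt (K := ℝ)).1 (hmono h),
    hlim, fun n => nestedWord_prefix R S T _ 0,
    fun n => (padPowerFree_nestedWord R S T hα (fun m => (hT m).1) _ 0).powerFree (by linarith),
    fun n i hi => ?_⟩
  have hTR m : T m ≤ 2 ^ S m * R := (hT m).1.lt_two_pow.le.trans (Nat.le_mul_of_pos_right _ hR)
  have := hasPowerFactor_nestedWord R S T hTR (Nat.lt_add_one_of_le hi) 0
  rwa [zero_add] at this
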